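/- Under Assumptions A1 and A2, let d(λ,Λ*) = min_{λ*∈Λ*} ‖λ − λ*‖. For every ε > 0 there exists δ0 > 0 such that: if the step sizes {δ(k)} satisfy rule I with δ(k) < δ0 for all k, or if they satisfy rule II, then for every initial λ(0) ≥ 0 there exists a finite K0 such that the subgradient-algorithm iterates satisfy d(λ(k),Λ*) < ε and ‖x(k) − x*‖ < ε for all k ≥ K0. -/

import Mathlib

/-!
A dual step is a projected subgradient step: the iterate's primal point `(x(k), y(k))`
maximises the Lagrangian at `λ(k)`, so `c - H y(k)` is a subgradient of `θ` there, bounded by a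
constant `G`, and for every dual optimum `λ*`
`‖λ(k+1) - λ*‖² ≤ ‖λ(k) - λ*‖² - 2 δ(k) (θ(λ(k)) - θ*) + δ(k)² G²`.
A separating hyperplane turns Slater's condition into strong duality `θ* = f*`; Slater's point
also makes the sublevel sets of `θ` compact, so `Λ*` is compact and `θ(λ) ≤ θ* + η` forces `λ`
close to `Λ*`. With steps below `δ0` the distance to `Λ*` cannot grow while
`θ(λ(k)) > θ* + η`, and `∑ δ(k) = ∞` forces the iterates into `{θ ≤ θ* + η}`, from where a step
moves them by at most `δ0 G`. Finally `x(k) = x†(γ(λ(k)))` depends continuously on `λ(k)` and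
equals `x*` on `Λ*`, because a dual optimum and the primal optimum together maximise the
Lagrangian.
-/

open Filter Metric Set Topology

theorem nonpos_of_forall_nonneg_add_mul_lt {a k C : ℝ} (h : ∀ t, 0 ≤ t → a + t * k < C) :
    k ≤ 0 := by
  by_contra! hk
  have := h (|C - a| / k) (by positivity)
  rw [div_mul_cancel₀ _ hk.ne'] at this
  linarith [le_abs_self (C - a)]

theorem le_of_forall_pos_add_mul_lt {a k C : ℝ} (h : ∀ t, 0 < t → a + t * k < C) : a ≤ C := by
  have : Tendsto (fun t ↦ a + t * k) (𝓝[>] 0) (𝓝 a) :=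
    tendsto_nhdsWithin_of_tendsto_nhds (by simpa using (continuous_const.add
      (continuous_id.mul continuous_const)).tendsto (0 : ℝ) (f := fun t : ℝ ↦ a + t * k))
  exact le_of_tendsto this (eventually_nhdsWithin_of_forall fun t ht ↦ (h t ht).le)

theorem le_add_mul_of_sq_le_sub_mul {a b d q G : ℝ} (hb : 0 ≤ b) (hd : 0 ≤ d) (hq : 0 ≤ q)
    (hG : 0 ≤ G) (h : a ^ 2 ≤ b ^ 2 - 2 * d * q + d ^ 2 * G ^ 2) : a ≤ b + d * G :=
  (abs_le_of_sq_le_sq' (by nlinarith [mul_nonneg hb (mul_nonneg hd hG), mul_nonneg hd hq])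
    (by positivity)).2

section Slater

variable {V ι : Type*} {P : Set V} {f : V → ℝ} {g : ι → V → ℝ}

theorem pi_prod_apply_eq_sum [Fintype ι] [DecidableEq ι] (φ : StrongDual ℝ ((ι → ℝ) × ℝ))
    (u : ι → ℝ) (r : ℝ) :
    φ (u, r) = ∑ i, u i * φ (fun j ↦ if i = j then 1 else 0, 0) + r * φ (0, 1) := by
  have : (u, r) = (u, (0 : ℝ)) + r • ((0 : ι → ℝ), (1 : ℝ)) := by ext <;> simp
  rw [this, map_add, map_smul, smul_eq_mul, mul_comm r]
  congr 1
  simpa using LinearMap.pi_apply_eq_sum_univ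
    ((φ : (ι → ℝ) × ℝ →ₗ[ℝ] ℝ).comp (LinearMap.inl ℝ (ι → ℝ) ℝ)) u

theorem isOpen_setOf_exists_lt_and_lt [Finite ι] (P : Set V) (f : V → ℝ) (g : ι → V → ℝ) :
    IsOpen {z : (ι → ℝ) × ℝ | ∃ p ∈ P, (∀ i, g i p < z.1 i) ∧ z.2 < f p} := by
  have : {z : (ι → ℝ) × ℝ | ∃ p ∈ P, (∀ i, g i p < z.1 i) ∧ z.2 < f p} =
      ⋃ p ∈ P, (⋂ i, {z : (ι → ℝ) × ℝ | g i p < z.1 i}) ∩ {z | z.2 < f p} := by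
    ext z
    simp [and_left_comm]
  rw [this]
  exact isOpen_biUnion fun p _ ↦ (isOpen_iInter_of_finite fun i ↦
    isOpen_lt continuous_const (by fun_prop)).inter (isOpen_lt (by fun_prop) continuous_const)

theorem convex_setOf_exists_lt_and_lt [AddCommGroup V] [Module ℝ V] (hf : ConcaveOn ℝ P f)
    (hg : ∀ i, ConvexOn ℝ P (g i)) :
    Convex ℝ {z : (ι → ℝ) × ℝ | ∃ p ∈ P, (∀ i, g i p < z.1 i) ∧ z.2 < f p} := by
  refine convex_iff_forall_pos.2 ?_
  rintro z₁ ⟨p₁, hp₁, hg₁, hf₁⟩ z₂ ⟨p₂, hp₂, hg₂, hf₂⟩ a b ha hb hab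
  refine ⟨a • p₁ + b • p₂, hf.1 hp₁ hp₂ ha.le hb.le hab, fun i ↦ ?_, ?_⟩
  · calc g i (a • p₁ + b • p₂) ≤ a • g i p₁ + b • g i p₂ := (hg i).2 hp₁ hp₂ ha.le hb.le hab
      _ < (a • z₁ + b • z₂).1 i := by
        simp only [smul_eq_mul, Prod.fst_add, Prod.smul_fst, Pi.add_apply, Pi.smul_apply]
        nlinarith [mul_lt_mul_of_pos_left (hg₁ i) ha, mul_lt_mul_of_pos_left (hg₂ i) hb]
  · calc (a • z₁ + b • z₂).2 < a • f p₁ + b • f p₂ := by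
          simp only [smul_eq_mul, Prod.snd_add, Prod.smul_snd]
          nlinarith [mul_lt_mul_of_pos_left hf₁ ha, mul_lt_mul_of_pos_left hf₂ hb]
      _ ≤ f (a • p₁ + b • p₂) := hf.2 hp₁ hp₂ ha.le hb.le hab

theorem exists_nonneg_multipliers_of_slater [AddCommGroup V] [Module ℝ V] [Fintype ι]
    (hf : ConcaveOn ℝ P f)
    (hg : ∀ i, ConvexOn ℝ P (g i)) {fStar : ℝ}
    (hfStar : ∀ p ∈ P, (∀ i, g i p ≤ 0) → f p ≤ fStar) (hslater : ∃ p ∈ P, ∀ i, g i p < 0) :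
    ∃ μ : ι → ℝ, (∀ i, 0 ≤ μ i) ∧ ∀ p ∈ P, f p - ∑ i, μ i * g i p ≤ fStar := by
  classical
  obtain ⟨φ, hφ⟩ := geometric_hahn_banach_open_point (convex_setOf_exists_lt_and_lt hf hg)
    (isOpen_setOf_exists_lt_and_lt P f g) (x := ((0 : ι → ℝ), fStar))
    fun ⟨p, hp, hgp, hfp⟩ ↦ (hfStar p hp fun i ↦ (hgp i).le).not_gt hfp
  set α : ι → ℝ := fun i ↦ φ (fun j ↦ if i = j then 1 else 0, 0)
  set β : ℝ := φ (0, 1)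
  have hφA : ∀ (u : ι → ℝ) (r : ℝ), (∃ p ∈ P, (∀ i, g i p < u i) ∧ r < f p) →
      ∑ i, u i * α i + r * β < fStar * β := fun u r h ↦ by
    have := hφ (u, r) h
    rw [pi_prod_apply_eq_sum φ u, pi_prod_apply_eq_sum φ 0 fStar] at this
    simpa [α, β] using this
  obtain ⟨p₀, hp₀, hslack⟩ := hslater
  have hα : ∀ i, α i ≤ 0 := fun i ↦
    nonpos_of_forall_nonneg_add_mul_lt (a := (f p₀ - 1) * β) (C := fStar * β) fun t ht ↦ by
      have := hφA (fun j ↦ if i = j then t else 0) (f p₀ - 1)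
        ⟨p₀, hp₀, fun j ↦ by split_ifs <;> linarith [hslack j], by linarith⟩
      simpa [ite_mul, add_comm] using this
  have hβ : 0 < β := by
    have hlow : ∀ t, 0 ≤ t → (f p₀ - 1) * β + t * -β < fStar * β := fun t ht ↦ by
      have := hφA 0 (f p₀ - 1 - t) ⟨p₀, hp₀, hslack, by linarith⟩
      simp only [Pi.zero_apply, zero_mul, Finset.sum_const_zero, zero_add] at this
      linarith
    refine lt_of_le_of_ne (neg_nonpos.1 (nonpos_of_forall_nonneg_add_mul_lt hlow)) fun h ↦ ?_
    simpa [← h] using hlow 0 le_rfl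
  have hkey : ∀ p ∈ P, ∑ i, g i p * α i + f p * β ≤ fStar * β := fun p hp ↦
    le_of_forall_pos_add_mul_lt (k := ∑ i, α i - β) fun t ht ↦ by
      have := hφA (fun i ↦ g i p + t) (f p - t) ⟨p, hp, fun i ↦ by simp [ht], by simp [ht]⟩
      simp only [add_mul, Finset.sum_add_distrib, ← Finset.mul_sum] at this
      linarith
  refine ⟨fun i ↦ -α i / β, fun i ↦ div_nonneg (neg_nonneg.2 (hα i)) hβ.le, fun p hp ↦ ?_⟩
  have hsum : ∑ i, -α i / β * g i p = -(∑ i, g i p * α i) / β := by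
    rw [neg_div, Finset.sum_div, ← Finset.sum_neg_distrib]
    exact Finset.sum_congr rfl fun i _ ↦ by ring
  rw [hsum, neg_div, sub_neg_eq_add, ← le_sub_iff_add_le', div_le_iff₀ hβ]
  linarith [hkey p hp]

end Slater

section Metric

variable {X : Type*} [PseudoMetricSpace X]

theorem infDist_le_infDist_add_of_forall_dist_le {x x' : X} {Λ : Set X} (hΛ : Λ.Nonempty)
    {a : ℝ} (h : ∀ l ∈ Λ, dist x' l ≤ dist x l + a) : infDist x' Λ ≤ infDist x Λ + a := by
  by_contra! hlt
  obtain ⟨l, hl, hxl⟩ := (infDist_lt_iff hΛ).1 (lt_sub_iff_add_lt.2 hlt)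
  linarith [h l hl, infDist_le_dist_of_mem (x := x') hl]

theorem exists_pos_forall_infDist_lt_of_le_add {f : X → ℝ} {K : Set X} {a b : ℝ} (hab : a < b)
    (hf : ContinuousOn f K) (hK : IsCompact {x ∈ K | f x ≤ b}) {ε : ℝ} (hε : 0 < ε) :
    ∃ η > 0, ∀ x ∈ K, f x ≤ a + η → infDist x {x ∈ K | f x ≤ a} < ε := by
  set C := {x ∈ K | f x ≤ b} ∩ {x | ε ≤ infDist x {x ∈ K | f x ≤ a}}
  have hC : IsCompact C := hK.inter_right (isClosed_le continuous_const (continuous_infDist_pt _))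
  have hfC : ∀ x ∈ C, a < f x := fun x hx ↦ by
    by_contra! hxa
    have := infDist_zero_of_mem (s := {x ∈ K | f x ≤ a}) ⟨hx.1.1, hxa⟩
    linarith [hx.2.out]
  obtain ⟨a', ha', hfa'⟩ := hC.exists_forall_le' (hf.mono fun x hx ↦ hx.1.1) hfC
  refine ⟨min (b - a) ((a' - a) / 2), lt_min (by linarith) (by linarith), fun x hx hfx ↦ ?_⟩
  by_contra! hfar
  have := hfa' x ⟨⟨hx, by linarith [min_le_left (b - a) ((a' - a) / 2)]⟩, hfar⟩
  linarith [min_le_right (b - a) ((a' - a) / 2)]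

theorem exists_pos_forall_infDist_lt_dist_lt {Y : Type*} [PseudoMetricSpace Y] {Φ : X → Y}
    (hΦ : Continuous Φ) {Λ : Set X} (hΛ : IsCompact Λ) (hne : Λ.Nonempty) {y : Y}
    (hΦΛ : ∀ l ∈ Λ, Φ l = y) {ε : ℝ} (hε : 0 < ε) :
    ∃ r > 0, ∀ x, infDist x Λ < r → dist (Φ x) y < ε := by
  obtain ⟨r, hr, hsub⟩ := hΛ.exists_thickening_subset_open
    ((isOpen_ball (x := y) (ε := ε)).preimage hΦ) fun l hl ↦ by simp [hΦΛ l hl, hε]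
  exact ⟨r, hr, fun x hx ↦ hsub ((mem_thickening_iff_infDist_lt hne).2 hx)⟩

end Metric

theorem continuous_of_unique_argmax_sub_mul {f g : ℝ → ℝ} {a b : ℝ}
    (hf : ContinuousOn f (Icc a b))
    (hg : ∀ w, g w ∈ Icc a b ∧ (∀ z ∈ Icc a b, f z - w * z ≤ f (g w) - w * g w) ∧
      (∀ z ∈ Icc a b, f z - w * z = f (g w) - w * g w → z = g w)) :
    Continuous g := by
  refine Metric.continuous_iff.2 fun w₀ ε hε ↦ ?_
  set F : ℝ → ℝ := fun z ↦ -(f z - w₀ * z)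
  have hF : ContinuousOn F (Icc a b) := ((hf.sub (continuousOn_const.mul continuousOn_id)).neg)
  have hsub : {z ∈ Icc a b | F z ≤ F (g w₀)} = {g w₀} := by
    ext z
    refine ⟨fun hz ↦ (hg w₀).2.2 z hz.1 (le_antisymm ((hg w₀).2.1 z hz.1) (by linarith [hz.2])),
      fun hz ↦ ?_⟩
    rw [hz]
    exact ⟨(hg w₀).1, le_rfl⟩
  obtain ⟨η, hη, hgap⟩ := exists_pos_forall_infDist_lt_of_le_add (lt_add_one (F (g w₀))) hF
    (isCompact_Icc.of_isClosed_subset (hF.preimage_isClosed_of_isClosed isClosed_Icc isClosed_Iic)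
      inter_subset_left) hε
  rw [hsub] at hgap
  have hab : a ≤ b := (hg w₀).1.1.trans (hg w₀).1.2
  refine ⟨η / (b - a + 1), div_pos hη (by linarith), fun w hw ↦ ?_⟩
  rw [← infDist_singleton]
  refine hgap _ (hg w).1 ?_
  have hdist : |(w - w₀) * (g w₀ - g w)| ≤ η := by
    have hgw : |g w₀ - g w| ≤ b - a + 1 :=
      abs_sub_le_iff.2 ⟨by linarith [(hg w).1.1, (hg w₀).1.2],
        by linarith [(hg w).1.2, (hg w₀).1.1]⟩
    calc |(w - w₀) * (g w₀ - g w)| = |w - w₀| * |g w₀ - g w| := abs_mul _ _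
      _ ≤ η / (b - a + 1) * (b - a + 1) := by gcongr; exact (Real.dist_eq w w₀ ▸ hw).le
      _ = η := div_mul_cancel₀ _ (by linarith)
  have := (hg w).2.1 _ (hg w₀).1
  simp only [F]
  nlinarith [le_abs_self ((w - w₀) * (g w₀ - g w))]

section SubgradientMethod

variable {X : Type*} [PseudoMetricSpace X]

variable {θ : X → ℝ} {θstar G η : ℝ} {lam : ℕ → X} {δ : ℕ → ℝ}

theorem frequently_le_add_of_sq_dist_succ_le {l : X} (hη : 0 < η) (hδ : ∀ k, 0 < δ k)
    (hδG : ∀ᶠ k in atTop, δ k * G ^ 2 ≤ η)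
    (hdiv : Tendsto (fun n ↦ ∑ k ∈ Finset.range n, δ k) atTop atTop)
    (hrec : ∀ k, dist (lam (k + 1)) l ^ 2 ≤
      dist (lam k) l ^ 2 - 2 * δ k * (θ (lam k) - θstar) + δ k ^ 2 * G ^ 2) :
    ∃ᶠ k in atTop, θ (lam k) ≤ θstar + η := by
  by_contra! hfar
  set a : ℕ → ℝ := fun k ↦ dist (lam k) l ^ 2 + η * ∑ i ∈ Finset.range k, δ i
  obtain ⟨N, hN⟩ : ∃ N, ∀ k ≥ N, a (k + 1) ≤ a k := by
    refine eventually_atTop.1 ?_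
    filter_upwards [hfar, hδG] with k hk hkG
    simp only [a, Finset.sum_range_succ]
    nlinarith [hrec k, mul_le_mul_of_nonneg_left hkG (hδ k).le,
      mul_le_mul_of_nonneg_left hk.le (hδ k).le]
  have hbdd : ∀ k ≥ N, a k ≤ a N := fun k hk ↦ by
    induction k, hk using Nat.le_induction with
    | base => exact le_rfl
    | succ k hk ih => exact (hN k hk).trans ih
  obtain ⟨k, hk, hkN⟩ := (((hdiv.const_mul_atTop hη).eventually_gt_atTop (a N)).and
    (eventually_ge_atTop N)).exists
  linarith [hbdd k hkN, sq_nonneg (dist (lam k) l)]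

theorem eventually_infDist_lt_of_sq_dist_succ_le {Λ : Set X} {ε δ0 : ℝ} (hΛ : Λ.Nonempty)
    (hη : 0 < η) (hG : 0 ≤ G) (hδ : ∀ k, 0 < δ k) (hδ0 : ∀ᶠ k in atTop, δ k ≤ δ0)
    (hδ0η : δ0 * G ^ 2 ≤ η) (hδ0ε : δ0 * G ≤ ε / 2)
    (hdiv : Tendsto (fun n ↦ ∑ k ∈ Finset.range n, δ k) atTop atTop)
    (hlow : ∀ k, θstar ≤ θ (lam k))
    (hgap : ∀ k, θ (lam k) ≤ θstar + η → infDist (lam k) Λ < ε / 2)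
    (hrec : ∀ k, ∀ l ∈ Λ, dist (lam (k + 1)) l ^ 2 ≤
      dist (lam k) l ^ 2 - 2 * δ k * (θ (lam k) - θstar) + δ k ^ 2 * G ^ 2) :
    ∀ᶠ k in atTop, infDist (lam k) Λ < ε := by
  have hδG : ∀ᶠ k in atTop, δ k * G ^ 2 ≤ η := hδ0.mono fun k hk ↦
    (mul_le_mul_of_nonneg_right hk (sq_nonneg G)).trans hδ0η
  have hstep : ∀ᶠ k in atTop, infDist (lam k) Λ < ε → infDist (lam (k + 1)) Λ < ε := by
    filter_upwards [hδ0, hδG] with k hk hkG hprev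
    by_cases hgood : θ (lam k) ≤ θstar + η
    · have := infDist_le_infDist_add_of_forall_dist_le hΛ fun l hl ↦
        le_add_mul_of_sq_le_sub_mul dist_nonneg (hδ k).le (sub_nonneg.2 (hlow k)) hG (hrec k l hl)
      nlinarith [hgap k hgood, mul_le_mul_of_nonneg_right hk hG]
    · have := infDist_le_infDist_add_of_forall_dist_le (x := lam k) (x' := lam (k + 1)) (a := 0)
        hΛ fun l hl ↦ by
        rw [add_zero]
        refine abs_le_of_sq_le_sq' ?_ dist_nonneg |>.2
        nlinarith [hrec k l hl, mul_le_mul_of_nonneg_left hkG (hδ k).le,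
          mul_le_mul_of_nonneg_left (not_le.1 hgood).le (hδ k).le]
      linarith
  obtain ⟨N, hN⟩ := eventually_atTop.1 hstep
  obtain ⟨k₀, hk₀, hk₀N⟩ := ((frequently_le_add_of_sq_dist_succ_le hη hδ hδG hdiv
    (hrec · _ hΛ.some_mem)).and_eventually (eventually_ge_atTop N)).exists
  refine eventually_atTop.2 ⟨k₀, fun k hk ↦ ?_⟩
  induction k, hk using Nat.le_induction with
  | base => linarith [hgap k₀ hk₀, infDist_nonneg (x := lam k₀) (s := Λ)]
  | succ k hk ih => exact hN k (hk₀N.trans hk) ih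

theorem exists_pos_forall_eventually_infDist_lt {K Λ : Set X} (hΛ : Λ.Nonempty) (hG : 0 ≤ G)
    (hlow : ∀ x ∈ K, θstar ≤ θ x)
    (hgap : ∀ ε > 0, ∃ η > 0, ∀ x ∈ K, θ x ≤ θstar + η → infDist x Λ < ε)
    {ε : ℝ} (hε : 0 < ε) :
    ∃ δ0 > 0, ∀ (lam : ℕ → X) (δ : ℕ → ℝ), (∀ k, 0 < δ k) → (∀ᶠ k in atTop, δ k ≤ δ0) →
      Tendsto (fun n ↦ ∑ k ∈ Finset.range n, δ k) atTop atTop → (∀ k, lam k ∈ K) →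
      (∀ k, ∀ l ∈ Λ, dist (lam (k + 1)) l ^ 2 ≤
        dist (lam k) l ^ 2 - 2 * δ k * (θ (lam k) - θstar) + δ k ^ 2 * G ^ 2) →
      ∀ᶠ k in atTop, infDist (lam k) Λ < ε := by
  obtain ⟨η, hη, hgapη⟩ := hgap (ε / 2) (half_pos hε)
  set δ0 := min (η / (G ^ 2 + 1)) (ε / (2 * (G + 1)))
  have hδ0 : 0 < δ0 := lt_min (by positivity) (by positivity)
  refine ⟨δ0, hδ0, fun lam δ hδ hsmall hdiv hK hrec ↦
    eventually_infDist_lt_of_sq_dist_succ_le hΛ hη hG hδ hsmall ?_ ?_ hdiv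
      (fun k ↦ hlow _ (hK k)) (fun k ↦ hgapη _ (hK k)) hrec⟩
  · have := (le_div_iff₀ (by positivity)).1 (min_le_left (η / (G ^ 2 + 1)) (ε / (2 * (G + 1))))
    nlinarith
  · have := (le_div_iff₀ (by positivity)).1 (min_le_right (η / (G ^ 2 + 1)) (ε / (2 * (G + 1))))
    nlinarith

end SubgradientMethod

theorem eventually_le_and_tendsto_sum_range {δ : ℕ → ℝ} {δ0 : ℝ} (hδ0 : 0 < δ0)
    (hδ : ∀ k, 0 < δ k)
    (hrule : ((∃ K : ℕ, ∃ d : ℝ, 0 < d ∧ ∀ k, K ≤ k → δ k = d) ∧ ∀ k, δ k < δ0) ∨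
      (Tendsto δ atTop (𝓝 0) ∧
        Tendsto (fun k ↦ ∑ u ∈ Finset.range (k + 1), δ u) atTop atTop)) :
    (∀ᶠ k in atTop, δ k ≤ δ0) ∧ Tendsto (fun n ↦ ∑ k ∈ Finset.range n, δ k) atTop atTop := by
  rcases hrule with ⟨⟨K, d, hd, hconst⟩, hlt⟩ | ⟨hzero, hsum⟩
  · -- eventually constant positive steps are not summable
    refine ⟨Eventually.of_forall fun k ↦ (hlt k).le,
      (not_summable_iff_tendsto_nat_atTop_of_nonneg fun k ↦ (hδ k).le).1 fun hs ↦ hd.ne' ?_⟩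
    exact tendsto_nhds_unique (tendsto_atTop_of_eventually_const hconst) hs.tendsto_atTop_zero
  · exact ⟨hzero.eventually_le_const hδ0, (tendsto_add_atTop_iff_nat 1).1 hsum⟩

section Network

variable {S T E : Type*}

def rateDomain [Fintype T] [DecidableEq S] (σ : T → S) (m M : S → ℝ) :
    Set ((S → ℝ) × (T → ℝ)) :=
  {p | (∀ t, 0 ≤ p.2 t) ∧ (∀ s, p.1 s = ∑ t, if σ t = s then p.2 t else 0) ∧
    (∀ s, p.1 s ∈ Icc (m s) (M s))}

def lagrangian [Fintype S] [Fintype T] [Fintype E] (U : S → ℝ → ℝ) (H : E → T → ℝ)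
    (c : E → ℝ) (x : S → ℝ) (y : T → ℝ) (lam : E → ℝ) : ℝ :=
  ∑ s, U s (x s) + ∑ e, lam e * (c e - ∑ t, H e t * y t)

def treeAlloc [DecidableEq T] (σ : T → S) (τ : S → T) (x : S → ℝ) : T → ℝ :=
  fun t ↦ if τ (σ t) = t then x (σ t) else 0

def IsDualFunction [Fintype S] [Fintype T] [Fintype E] [DecidableEq S] (σ : T → S)
    (m M : S → ℝ) (U : S → ℝ → ℝ) (H : E → T → ℝ) (c : E → ℝ) (θ : (E → ℝ) → ℝ) : Prop :=
  ∀ lam, IsGreatest {v | ∃ p ∈ rateDomain σ m M, v = lagrangian U H c p.1 p.2 lam} (θ lam)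

def IsMinTreeCost [Fintype E] (σ : T → S) (H : E → T → ℝ) (γ : S → (E → ℝ) → ℝ) : Prop :=
  ∀ s lam, IsLeast {w | ∃ t, σ t = s ∧ w = ∑ e, H e t * lam e} (γ s lam)

def IsRateResponse (U : S → ℝ → ℝ) (m M : S → ℝ) (xdag : S → ℝ → ℝ) : Prop :=
  ∀ s w, xdag s w ∈ Icc (m s) (M s) ∧
    (∀ z ∈ Icc (m s) (M s), U s z - w * z ≤ U s (xdag s w) - w * xdag s w) ∧
    (∀ z ∈ Icc (m s) (M s), U s z - w * z = U s (xdag s w) - w * xdag s w → z = xdag s w)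

variable {σ : T → S} {m M : S → ℝ} {U : S → ℝ → ℝ} {H : E → T → ℝ} {c : E → ℝ}

theorem sum_fiberwise_ite [Fintype S] [Fintype T] [DecidableEq S] (σ : T → S) (f : T → ℝ) :
    ∑ s, ∑ t, (if σ t = s then f t else 0) = ∑ t, f t := by
  rw [Finset.sum_comm]
  simp

theorem sum_mul_fst_of_mem_rateDomain [Fintype S] [Fintype T] [DecidableEq S]
    {p : (S → ℝ) × (T → ℝ)} (hp : p ∈ rateDomain σ m M) (w : S → ℝ) :
    ∑ s, w s * p.1 s = ∑ t, w (σ t) * p.2 t := by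
  rw [← sum_fiberwise_ite σ]
  refine Finset.sum_congr rfl fun s _ ↦ ?_
  rw [hp.2.1 s, Finset.mul_sum]
  exact Finset.sum_congr rfl fun t _ ↦ by split_ifs with h <;> simp [h]

theorem ite_treeAlloc [DecidableEq S] [DecidableEq T] {τ : S → T} (hτ : ∀ s, σ (τ s) = s)
    (x : S → ℝ) (s : S) (t : T) :
    (if σ t = s then treeAlloc σ τ x t else 0) = if τ s = t then x s else 0 := by
  by_cases hts : τ s = t
  · subst hts; simp [treeAlloc, hτ]
  · rw [if_neg hts]
    split_ifs with hσ
    · subst hσ; simp [treeAlloc, hts]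
    · rfl

theorem treeAlloc_mem_rateDomain [Fintype T] [DecidableEq S] [DecidableEq T] {τ : S → T}
    (hτ : ∀ s, σ (τ s) = s) (hm : ∀ s, 0 ≤ m s) {x : S → ℝ} (hx : ∀ s, x s ∈ Icc (m s) (M s)) :
    (x, treeAlloc σ τ x) ∈ rateDomain σ m M := by
  refine ⟨fun t ↦ ?_, fun s ↦ ?_, hx⟩
  · dsimp only [treeAlloc]; split_ifs
    exacts [(hm _).trans (hx _).1, le_rfl]
  · simp [ite_treeAlloc hτ]

theorem sum_mul_treeAlloc [Fintype S] [Fintype T] [DecidableEq S] [DecidableEq T] {τ : S → T}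
    (hτ : ∀ s, σ (τ s) = s) (f : T → ℝ) (x : S → ℝ) :
    ∑ t, f t * treeAlloc σ τ x t = ∑ s, f (τ s) * x s := by
  rw [← sum_fiberwise_ite σ]
  refine Finset.sum_congr rfl fun s _ ↦ ?_
  simp_rw [← mul_ite_zero, ite_treeAlloc hτ, mul_ite_zero]
  simp

theorem lagrangian_eq [Fintype S] [Fintype T] [Fintype E] (x : S → ℝ) (y : T → ℝ)
    (lam : E → ℝ) :
    lagrangian U H c x y lam =
      ∑ s, U s (x s) + ∑ e, lam e * c e - ∑ t, (∑ e, H e t * lam e) * y t := by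
  simp only [lagrangian, mul_sub, Finset.sum_sub_distrib, Finset.mul_sum, Finset.sum_mul]
  rw [Finset.sum_comm (f := fun e t ↦ lam e * (H e t * y t))]
  simp only [mul_left_comm, mul_comm, add_sub_assoc]

variable {θ : (E → ℝ) → ℝ} {γ : S → (E → ℝ) → ℝ} {xdag : S → ℝ → ℝ}

theorem lagrangian_le_of_mem_rateDomain [Fintype S] [Fintype T] [Fintype E] [DecidableEq S]
    {lam : E → ℝ} {w : S → ℝ}
    (hw : ∀ s, IsLeast {v | ∃ t, σ t = s ∧ v = ∑ e, H e t * lam e} (w s))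
    {p : (S → ℝ) × (T → ℝ)} (hp : p ∈ rateDomain σ m M) :
    lagrangian U H c p.1 p.2 lam ≤ ∑ s, (U s (p.1 s) - w s * p.1 s) + ∑ e, lam e * c e := by
  have : ∑ t, w (σ t) * p.2 t ≤ ∑ t, (∑ e, H e t * lam e) * p.2 t :=
    Finset.sum_le_sum fun t _ ↦ mul_le_mul_of_nonneg_right ((hw (σ t)).2 ⟨t, rfl, rfl⟩) (hp.1 t)
  rw [lagrangian_eq, Finset.sum_sub_distrib, sum_mul_fst_of_mem_rateDomain hp]
  linarith

theorem lagrangian_treeAlloc [Fintype S] [Fintype T] [Fintype E] [DecidableEq S] [DecidableEq T]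
    {lam : E → ℝ} {w : S → ℝ} {τ : S → T}
    (hτ : ∀ s, σ (τ s) = s ∧ ∑ e, H e (τ s) * lam e = w s) (x : S → ℝ) :
    lagrangian U H c x (treeAlloc σ τ x) lam =
      ∑ s, (U s (x s) - w s * x s) + ∑ e, lam e * c e := by
  rw [lagrangian_eq, sum_mul_treeAlloc (fun s ↦ (hτ s).1), Finset.sum_sub_distrib]
  simp only [(hτ _).2]
  ring

theorem dual_eq_sum_xdag [Fintype S] [Fintype T] [Fintype E] [DecidableEq S] (hm : ∀ s, 0 ≤ m s)
    (hθ : IsDualFunction σ m M U H c θ) (hγ : IsMinTreeCost σ H γ)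
    (hx : IsRateResponse U m M xdag) (lam : E → ℝ) :
    θ lam = ∑ s, (U s (xdag s (γ s lam)) - γ s lam * xdag s (γ s lam)) + ∑ e, lam e * c e := by
  classical
  choose τ hτσ hτ using fun s ↦ (hγ s lam).1
  refine le_antisymm ?_ ((hθ lam).2 ⟨_, treeAlloc_mem_rateDomain hτσ hm fun s ↦ (hx s _).1,
    (lagrangian_treeAlloc (fun s ↦ ⟨hτσ s, (hτ s).symm⟩) _).symm⟩)
  obtain ⟨p, hp, hθp⟩ := (hθ lam).1
  rw [hθp]
  exact (lagrangian_le_of_mem_rateDomain (hγ · lam) hp).trans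
    (add_le_add_left (Finset.sum_le_sum fun s _ ↦ (hx s _).2.1 _ (hp.2.2 s)) _)

theorem fst_eq_xdag_of_dual_le_lagrangian [Fintype S] [Fintype T] [Fintype E] [DecidableEq S]
    (hm : ∀ s, 0 ≤ m s) (hθ : IsDualFunction σ m M U H c θ) (hγ : IsMinTreeCost σ H γ)
    (hx : IsRateResponse U m M xdag) {p : (S → ℝ) × (T → ℝ)} (hp : p ∈ rateDomain σ m M)
    {lam : E → ℝ} (h : θ lam ≤ lagrangian U H c p.1 p.2 lam) (s : S) :
    p.1 s = xdag s (γ s lam) := by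
  have hle : ∀ s ∈ Finset.univ, U s (p.1 s) - γ s lam * p.1 s ≤
      U s (xdag s (γ s lam)) - γ s lam * xdag s (γ s lam) := fun s _ ↦ (hx s _).2.1 _ (hp.2.2 s)
  have hsum := le_antisymm (Finset.sum_le_sum hle) (by
    linarith [dual_eq_sum_xdag hm hθ hγ hx lam,
      lagrangian_le_of_mem_rateDomain (U := U) (c := c) (hγ · lam) hp])
  exact (hx s _).2.2 _ (hp.2.2 s)
    ((Finset.sum_eq_sum_iff_of_le hle).1 hsum s (Finset.mem_univ s))

theorem sum_le_lagrangian_of_feasible [Fintype S] [Fintype T] [Fintype E] {x : S → ℝ}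
    {y : T → ℝ} (hfeas : ∀ e, ∑ t, H e t * y t ≤ c e) {lam : E → ℝ} (hlam : ∀ e, 0 ≤ lam e) :
    ∑ s, U s (x s) ≤ lagrangian U H c x y lam :=
  le_add_of_nonneg_right
    (Finset.sum_nonneg fun e _ ↦ mul_nonneg (hlam e) (sub_nonneg.2 (hfeas e)))

theorem le_dual_of_feasible [Fintype S] [Fintype T] [Fintype E] [DecidableEq S]
    (hθ : IsDualFunction σ m M U H c θ) {p : (S → ℝ) × (T → ℝ)} (hp : p ∈ rateDomain σ m M)
    (hfeas : ∀ e, ∑ t, H e t * p.2 t ≤ c e) {lam : E → ℝ} (hlam : ∀ e, 0 ≤ lam e) :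
    ∑ s, U s (p.1 s) ≤ θ lam :=
  (sum_le_lagrangian_of_feasible hfeas hlam).trans ((hθ lam).2 ⟨p, hp, rfl⟩)

theorem dual_sub_le_of_lagrangian_eq [Fintype S] [Fintype T] [Fintype E] [DecidableEq S]
    (hθ : IsDualFunction σ m M U H c θ) {p : (S → ℝ) × (T → ℝ)} (hp : p ∈ rateDomain σ m M)
    {lam : E → ℝ} (hpθ : lagrangian U H c p.1 p.2 lam = θ lam) (μ : E → ℝ) :
    θ lam - θ μ ≤ ∑ e, (c e - ∑ t, H e t * p.2 t) * (lam e - μ e) := by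
  have hμ := (hθ μ).2 ⟨p, hp, rfl⟩
  have : ∑ e, (c e - ∑ t, H e t * p.2 t) * (lam e - μ e) =
      ∑ e, lam e * (c e - ∑ t, H e t * p.2 t) - ∑ e, μ e * (c e - ∑ t, H e t * p.2 t) := by
    rw [← Finset.sum_sub_distrib]
    exact Finset.sum_congr rfl fun e _ ↦ by ring
  simp only [lagrangian] at hpθ hμ
  linarith

theorem abs_slack_le [Fintype S] [Fintype T] [DecidableEq S] (hH : ∀ e t, H e t = 0 ∨ H e t = 1)
    {p : (S → ℝ) × (T → ℝ)} (hp : p ∈ rateDomain σ m M) (e : E) :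
    |c e - ∑ t, H e t * p.2 t| ≤ |c e| + ∑ s, M s := by
  have hload : 0 ≤ ∑ t, H e t * p.2 t := Finset.sum_nonneg fun t _ ↦
    mul_nonneg (by rcases hH e t with h | h <;> simp [h]) (hp.1 t)
  have hload' : ∑ t, H e t * p.2 t ≤ ∑ s, M s := calc
    _ ≤ ∑ t, p.2 t := Finset.sum_le_sum fun t _ ↦ by rcases hH e t with h | h <;> simp [h, hp.1 t]
    _ = ∑ s, p.1 s := by simpa using (sum_mul_fst_of_mem_rateDomain hp 1).symm
    _ ≤ ∑ s, M s := Finset.sum_le_sum fun s _ ↦ (hp.2.2 s).2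
  rw [abs_le]
  constructor <;> linarith [le_abs_self (c e), neg_abs_le (c e)]

theorem continuous_minTreeCost [Fintype T] [Fintype E] (hγ : IsMinTreeCost σ H γ) (s : S) :
    Continuous (γ s) := by
  classical
  obtain ⟨t₀, ht₀, -⟩ := (hγ s 0).1
  have hne : (Finset.univ.filter fun t ↦ σ t = s).Nonempty := ⟨t₀, by simp [ht₀]⟩
  have : γ s = fun lam ↦ (Finset.univ.filter fun t ↦ σ t = s).inf' hne
      fun t ↦ ∑ e, H e t * lam e := by
    funext lam
    obtain ⟨t, hts, ht⟩ := (hγ s lam).1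
    refine le_antisymm (Finset.le_inf' _ _ fun t' ht' ↦
      (hγ s lam).2 ⟨t', (Finset.mem_filter.1 ht').2, rfl⟩) ?_
    rw [ht]
    exact Finset.inf'_le _ (by simp [hts])
  rw [this]
  exact Continuous.finset_inf'_apply hne fun t _ ↦ by fun_prop

theorem convex_rateDomain [Fintype T] [DecidableEq S] : Convex ℝ (rateDomain σ m M) := by
  rintro p ⟨hp₀, hpσ, hpI⟩ q ⟨hq₀, hqσ, hqI⟩ a b ha hb hab
  refine ⟨fun t ↦ ?_, fun s ↦ ?_, fun s ↦ ?_⟩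
  · simpa using add_nonneg (mul_nonneg ha (hp₀ t)) (mul_nonneg hb (hq₀ t))
  · simp only [Prod.fst_add, Prod.smul_fst, Prod.snd_add, Prod.smul_snd, Pi.add_apply,
      Pi.smul_apply, smul_eq_mul, hpσ s, hqσ s, Finset.mul_sum, ← Finset.sum_add_distrib]
    exact Finset.sum_congr rfl fun t _ ↦ by split_ifs <;> simp
  · simpa using convex_Icc (m s) (M s) (hpI s) (hqI s) ha hb hab

theorem concaveOn_sum_utility [Fintype S] [Fintype T] [DecidableEq S]
    (hU : ∀ s, ConcaveOn ℝ (Icc (m s) (M s)) (U s)) :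
    ConcaveOn ℝ (rateDomain σ m M) fun p ↦ ∑ s, U s (p.1 s) := by
  refine ⟨convex_rateDomain, fun p hp q hq a b ha hb hab ↦ ?_⟩
  simp only [smul_eq_mul, Finset.mul_sum, ← Finset.sum_add_distrib]
  exact Finset.sum_le_sum fun s _ ↦ by
    simpa using (hU s).2 (hp.2.2 s) (hq.2.2 s) ha hb hab

theorem convexOn_load_sub [Fintype T] [DecidableEq S] (e : E) :
    ConvexOn ℝ (rateDomain σ m M) fun p ↦ ∑ t, H e t * p.2 t - c e := by
  refine ⟨convex_rateDomain, fun p _ q _ a b _ _ hab ↦ le_of_eq ?_⟩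
  simp only [Prod.snd_add, Prod.smul_snd, Pi.add_apply, Pi.smul_apply, smul_eq_mul, mul_add,
    Finset.sum_add_distrib, mul_left_comm (H e _), ← Finset.mul_sum]
  linear_combination (c e) * hab

theorem exists_dual_le_of_slater [Fintype S] [Fintype T] [Fintype E] [DecidableEq S]
    (hθ : IsDualFunction σ m M U H c θ) (hU : ∀ s, ConcaveOn ℝ (Icc (m s) (M s)) (U s))
    {fStar : ℝ} (hfStar : ∀ p ∈ rateDomain σ m M, (∀ e, ∑ t, H e t * p.2 t ≤ c e) →
      ∑ s, U s (p.1 s) ≤ fStar)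
    (hslater : ∃ p ∈ rateDomain σ m M, ∀ e, ∑ t, H e t * p.2 t < c e) :
    ∃ μ : E → ℝ, (∀ e, 0 ≤ μ e) ∧ θ μ ≤ fStar := by
  obtain ⟨μ, hμ, hle⟩ := exists_nonneg_multipliers_of_slater (concaveOn_sum_utility hU)
    (convexOn_load_sub (H := H) (c := c)) (fun p hp h ↦ hfStar p hp fun e ↦ sub_nonpos.1 (h e))
    (hslater.imp fun p hp ↦ ⟨hp.1, fun e ↦ sub_neg.2 (hp.2 e)⟩)
  refine ⟨μ, hμ, ?_⟩
  obtain ⟨p, hp, hθp⟩ := (hθ μ).1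
  have := hle p hp
  simp only [hθp, lagrangian, mul_sub, Finset.sum_sub_distrib] at this ⊢
  linarith

theorem setOf_forall_dual_le_eq {fStar : ℝ}
    (hweak : ∀ μ : E → ℝ, (∀ e, 0 ≤ μ e) → fStar ≤ θ μ)
    (hstrong : ∃ μ : E → ℝ, (∀ e, 0 ≤ μ e) ∧ θ μ ≤ fStar) :
    {l : EuclideanSpace ℝ E | (∀ e, 0 ≤ l e) ∧
      ∀ μ : E → ℝ, (∀ e, 0 ≤ μ e) → θ (fun e ↦ l e) ≤ θ μ} =
      {l | (∀ e, 0 ≤ l e) ∧ θ (fun e ↦ l e) ≤ fStar} := by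
  obtain ⟨μ₀, hμ₀, hμ₀le⟩ := hstrong
  ext l
  exact and_congr_right fun hl ↦ ⟨fun h ↦ (h μ₀ hμ₀).trans hμ₀le,
    fun h μ hμ ↦ h.trans (hweak μ hμ)⟩

theorem continuous_dual [Fintype S] [Fintype T] [Fintype E] [DecidableEq S]
    (hm : ∀ s, 0 ≤ m s) (hθ : IsDualFunction σ m M U H c θ) (hγ : IsMinTreeCost σ H γ)
    (hx : IsRateResponse U m M xdag) (hU : ∀ s, ContinuousOn (U s) (Icc (m s) (M s))) :
    Continuous fun l : EuclideanSpace ℝ E ↦ θ (fun e ↦ l e) := by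
  simp_rw [dual_eq_sum_xdag hm hθ hγ hx]
  refine (continuous_finsetSum _ fun s _ ↦ ?_).add (continuous_finsetSum _ fun e _ ↦ ?_)
  · have hγs : Continuous fun l : EuclideanSpace ℝ E ↦ γ s (fun e ↦ l e) :=
      (continuous_minTreeCost hγ s).comp (PiLp.continuous_ofLp 2 _)
    have hxs := (continuous_of_unique_argmax_sub_mul (hU s) (hx s)).comp hγs
    exact ((hU s).comp_continuous hxs fun l ↦ (hx s _).1).sub (hγs.mul hxs)
  · exact ((continuous_apply e).comp (PiLp.continuous_ofLp 2 _)).mul continuous_const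

theorem isCompact_dual_sublevel [Fintype S] [Fintype T] [Fintype E] [DecidableEq S]
    (hθ : IsDualFunction σ m M U H c θ)
    (hθc : Continuous fun l : EuclideanSpace ℝ E ↦ θ (fun e ↦ l e))
    {p : (S → ℝ) × (T → ℝ)} (hp : p ∈ rateDomain σ m M)
    (hslack : ∀ e, ∑ t, H e t * p.2 t < c e) (b : ℝ) :
    IsCompact {l : EuclideanSpace ℝ E | (∀ e, 0 ≤ l e) ∧ θ (fun e ↦ l e) ≤ b} := by
  have hbox := (isCompact_univ_pi fun e ↦ isCompact_Icc (a := 0)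
    (b := (b - ∑ s, U s (p.1 s)) / (c e - ∑ t, H e t * p.2 t))).image (PiLp.continuous_toLp 2 _)
  refine hbox.of_isClosed_subset ?_ fun l ⟨hl, hθl⟩ ↦ ⟨WithLp.ofLp l, fun e _ ↦ ⟨hl e, ?_⟩, rfl⟩
  · simp only [ofPred_and, ofPred_forall]
    exact (isClosed_iInter fun e ↦ isClosed_le continuous_const
      ((continuous_apply e).comp (PiLp.continuous_ofLp 2 _))).inter
        (isClosed_le hθc continuous_const)
  · -- Slater's point bounds each multiplier through `θ l ≥ lagrangian p l`
    have hLθ := (hθ fun e ↦ l e).2 ⟨p, hp, rfl⟩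
    have hsingle := Finset.single_le_sum (f := fun e ↦ l e * (c e - ∑ t, H e t * p.2 t))
      (fun e _ ↦ mul_nonneg (hl e) (sub_pos.2 (hslack e)).le) (Finset.mem_univ e)
    rw [le_div_iff₀ (sub_pos.2 (hslack e))]
    simp only [lagrangian] at hLθ hsingle
    linarith

theorem sq_dist_le_of_eq_max_zero_sub [Fintype E] {a b l : EuclideanSpace ℝ E} {g : E → ℝ}
    {d : ℝ} (hl : ∀ e, 0 ≤ l e) (hb : ∀ e, b e = max 0 (a e - d * g e)) :
    dist b l ^ 2 ≤ dist a l ^ 2 - 2 * d * ∑ e, g e * (a e - l e) + d ^ 2 * ∑ e, g e ^ 2 := by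
  have hsq : ∀ x y : EuclideanSpace ℝ E, dist x y ^ 2 = ∑ e, (x e - y e) ^ 2 := fun x y ↦ by
    rw [EuclideanSpace.dist_eq, Real.sq_sqrt (by positivity)]
    simp [Real.dist_eq, sq_abs]
  rw [hsq, hsq, Finset.mul_sum, Finset.mul_sum, ← Finset.sum_sub_distrib,
    ← Finset.sum_add_distrib]
  refine Finset.sum_le_sum fun e _ ↦ ?_
  have : (b e - l e) ^ 2 ≤ (a e - d * g e - l e) ^ 2 := by
    rw [hb e]
    rcases le_total 0 (a e - d * g e) with h | h
    · rw [max_eq_right h]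
    · rw [max_eq_left h]
      nlinarith [hl e]
  linarith

theorem sq_dist_dual_step_le [Fintype S] [Fintype T] [Fintype E] [DecidableEq S]
    (hθ : IsDualFunction σ m M U H c θ) (hH : ∀ e t, H e t = 0 ∨ H e t = 1)
    {p : (S → ℝ) × (T → ℝ)} (hp : p ∈ rateDomain σ m M) {a b l : EuclideanSpace ℝ E}
    (hpa : lagrangian U H c p.1 p.2 (fun e ↦ a e) = θ (fun e ↦ a e)) {d : ℝ} (hd : 0 ≤ d)
    (hl : ∀ e, 0 ≤ l e) (hb : ∀ e, b e = max 0 (a e - d * (c e - ∑ t, H e t * p.2 t))) :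
    dist b l ^ 2 ≤ dist a l ^ 2 - 2 * d * (θ (fun e ↦ a e) - θ (fun e ↦ l e)) +
      d ^ 2 * √(∑ e, (|c e| + ∑ s, M s) ^ 2) ^ 2 := by
  have hsub := dual_sub_le_of_lagrangian_eq hθ hp hpa (fun e ↦ l e)
  have hbound : ∑ e, (c e - ∑ t, H e t * p.2 t) ^ 2 ≤ √(∑ e, (|c e| + ∑ s, M s) ^ 2) ^ 2 := by
    rw [Real.sq_sqrt (by positivity)]
    exact Finset.sum_le_sum fun e _ ↦ sq_le_sq' (abs_le.1 (abs_slack_le hH hp e)).1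
      (abs_le.1 (abs_slack_le hH hp e)).2
  have := sq_dist_le_of_eq_max_zero_sub hl hb
  nlinarith [mul_le_mul_of_nonneg_left hsub hd, mul_le_mul_of_nonneg_left hbound (sq_nonneg d)]

theorem sq_dist_subgradient_step_le [Fintype S] [Fintype T] [Fintype E] [DecidableEq S]
    [DecidableEq T] (hm : ∀ s, 0 ≤ m s) (hθ : IsDualFunction σ m M U H c θ)
    (hγ : IsMinTreeCost σ H γ) (hxdag : IsRateResponse U m M xdag)
    (hH : ∀ e t, H e t = 0 ∨ H e t = 1) {a b l : EuclideanSpace ℝ E} {x : S → ℝ} {y : T → ℝ}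
    (hx : ∀ s, x s = xdag s (γ s fun e ↦ a e))
    (hy : ∃ τ : S → T, (∀ s, σ (τ s) = s ∧ ∑ e, H e (τ s) * a e = γ s fun e ↦ a e) ∧
      ∀ t, y t = if τ (σ t) = t then x (σ t) else 0)
    {d θstar : ℝ} (hd : 0 ≤ d) (hl : ∀ e, 0 ≤ l e) (hlθ : θ (fun e ↦ l e) ≤ θstar)
    (hb : ∀ e, b e = max 0 (a e - d * (c e - ∑ t, H e t * y t))) :
    dist b l ^ 2 ≤ dist a l ^ 2 - 2 * d * (θ (fun e ↦ a e) - θstar) +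
      d ^ 2 * √(∑ e, (|c e| + ∑ s, M s) ^ 2) ^ 2 := by
  obtain ⟨τ, hτ, hyτ⟩ := hy
  obtain rfl : y = treeAlloc σ τ x := funext hyτ
  have hxI : ∀ s, x s ∈ Icc (m s) (M s) := fun s ↦ hx s ▸ (hxdag s _).1
  have hpa : lagrangian U H c x (treeAlloc σ τ x) (fun e ↦ a e) = θ (fun e ↦ a e) := by
    rw [lagrangian_treeAlloc hτ, dual_eq_sum_xdag hm hθ hγ hxdag]
    simp only [hx]
  have := sq_dist_dual_step_le hθ hH (treeAlloc_mem_rateDomain (fun s ↦ (hτ s).1) hm hxI) hpa hd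
    hl hb
  nlinarith [mul_le_mul_of_nonneg_left hlθ hd]

def sessionRates (γ : S → (E → ℝ) → ℝ) (xdag : S → ℝ → ℝ) (l : EuclideanSpace ℝ E) :
    EuclideanSpace ℝ S :=
  WithLp.toLp 2 fun s ↦ xdag s (γ s fun e ↦ l e)

theorem continuous_sessionRates [Fintype T] [Fintype E] (hγ : IsMinTreeCost σ H γ)
    (hxdag : IsRateResponse U m M xdag) (hU : ∀ s, ContinuousOn (U s) (Icc (m s) (M s))) :
    Continuous (sessionRates γ xdag) :=
  (PiLp.continuous_toLp 2 _).comp (continuous_pi fun s ↦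
    (continuous_of_unique_argmax_sub_mul (hU s) (hxdag s)).comp
      ((continuous_minTreeCost hγ s).comp (PiLp.continuous_ofLp 2 _)))

theorem sessionRates_eq_of_dual_le [Fintype S] [Fintype T] [Fintype E] [DecidableEq S]
    (hm : ∀ s, 0 ≤ m s) (hθ : IsDualFunction σ m M U H c θ) (hγ : IsMinTreeCost σ H γ)
    (hxdag : IsRateResponse U m M xdag) {p : (S → ℝ) × (T → ℝ)} (hp : p ∈ rateDomain σ m M)
    (hfeas : ∀ e, ∑ t, H e t * p.2 t ≤ c e) {l : EuclideanSpace ℝ E} (hl : ∀ e, 0 ≤ l e)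
    (hθl : θ (fun e ↦ l e) ≤ ∑ s, U s (p.1 s)) :
    sessionRates γ xdag l = WithLp.toLp 2 p.1 :=
  PiLp.ext fun s ↦ (fst_eq_xdag_of_dual_le_lagrangian hm hθ hγ hxdag hp
    (hθl.trans (sum_le_lagrangian_of_feasible hfeas hl)) s).symm

end Network

theorem subgradient_convergence_general
    {S T E : Type} [Fintype S] [Fintype T] [Fintype E]
    [DecidableEq S] [DecidableEq T]
    (σ : T → S)
    (H : E → T → ℝ) (hH : ∀ e t, H e t = 0 ∨ H e t = 1)
    (c : E → ℝ)
    (m M : S → ℝ) (hm : ∀ s, 0 ≤ m s)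
    (U : S → ℝ → ℝ)
    -- Assumption A1
    (hUconc : ∀ s, StrictConcaveOn ℝ (Set.Icc (m s) (M s)) (U s))
    (hUdiff : ∀ s, ContDiffOn ℝ 1 (U s) (Set.Icc (m s) (M s)))
    -- the domain D
    (D : Set ((S → ℝ) × (T → ℝ)))
    (hD : D = {p | (∀ t, 0 ≤ p.2 t) ∧
      (∀ s, p.1 s = ∑ t, if σ t = s then p.2 t else 0) ∧
      (∀ s, p.1 s ∈ Set.Icc (m s) (M s))})
    -- the Lagrangian
    (L : (S → ℝ) → (T → ℝ) → (E → ℝ) → ℝ)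
    (hL : ∀ x y lam, L x y lam =
      ∑ s, U s (x s) + ∑ e, lam e * (c e - ∑ t, H e t * y t))
    -- the optimal value of the master problem
    (fStar : ℝ)
    (hfStar : IsGreatest {v | ∃ p ∈ D, (∀ e, ∑ t, H e t * p.2 t ≤ c e) ∧
      v = ∑ s, U s (p.1 s)} fStar)
    -- the dual function
    (θ : (E → ℝ) → ℝ)
    (hθ : ∀ lam : E → ℝ, IsGreatest {v | ∃ p ∈ D, v = L p.1 p.2 lam} (θ lam))
    -- Assumption A2 (Slater)
    (hslater : ∃ p ∈ D, ∀ e, ∑ t, H e t * p.2 t < c e)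
    -- the minimum tree cost γ(s, λ)
    (γ : S → (E → ℝ) → ℝ)
    (hγ : ∀ s lam, IsLeast {w | ∃ t, σ t = s ∧ w = ∑ e, H e t * lam e} (γ s lam))
    -- x_s†(w) : the unique maximizer of x ↦ U_s(x) - w·x over [m_s, M_s]
    (xdag : S → ℝ → ℝ)
    (hxdag : ∀ (s : S) (w : ℝ), xdag s w ∈ Set.Icc (m s) (M s) ∧
      (∀ z ∈ Set.Icc (m s) (M s), U s z - w * z ≤ U s (xdag s w) - w * xdag s w) ∧
      (∀ z ∈ Set.Icc (m s) (M s),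
        U s z - w * z = U s (xdag s w) - w * xdag s w → z = xdag s w))
    -- x* is the unique optimal session-rate vector of the MP
    (xstar : EuclideanSpace ℝ S)
    (hxstar_opt : ∃ ystar : T → ℝ, ((fun s => xstar s), ystar) ∈ D ∧
      (∀ e, ∑ t, H e t * ystar t ≤ c e) ∧ ∑ s, U s (xstar s) = fStar) :
    ∀ ε : ℝ, 0 < ε → ∃ δ0 : ℝ, 0 < δ0 ∧
      ∀ (lam : ℕ → EuclideanSpace ℝ E) (x : ℕ → EuclideanSpace ℝ S)
        (y : ℕ → T → ℝ) (δseq : ℕ → ℝ),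
        (∀ k, 0 < δseq k) →
        -- the dual update
        (∀ k e, lam (k+1) e =
          max 0 (lam k e - δseq k * (c e - ∑ t, H e t * y k t))) →
        -- the primal updates
        (∀ k s, x k s = xdag s (γ s (fun e => lam k e))) →
        (∀ k, ∃ τ : S → T,
          (∀ s, σ (τ s) = s ∧
            ∑ e, H e (τ s) * lam k e = γ s (fun e => lam k e)) ∧
          (∀ t, y k t = if τ (σ t) = t then x k (σ t) else 0)) →
        -- step size rule I with δ(k) < δ0 for all k, or step size rule II
        (((∃ K : ℕ, ∃ δ : ℝ, 0 < δ ∧ ∀ k, K ≤ k → δseq k = δ) ∧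
            (∀ k, δseq k < δ0)) ∨
          ((∃ K : ℕ, ∀ k, K ≤ k → δseq (k+1) ≤ δseq k) ∧
            Filter.Tendsto δseq Filter.atTop (nhds 0) ∧
            Filter.Tendsto (fun k => ∑ u ∈ Finset.range (k+1), δseq u)
              Filter.atTop Filter.atTop)) →
        -- any initial λ(0) ≥ 0
        (∀ e, 0 ≤ lam 0 e) →
        ∃ K0 : ℕ, ∀ k, K0 ≤ k →
          Metric.infDist (lam k)
            {l : EuclideanSpace ℝ E | (∀ e, 0 ≤ l e) ∧
              ∀ μ : E → ℝ, (∀ e, 0 ≤ μ e) → θ (fun e => l e) ≤ θ μ} < ε ∧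
          ‖x k - xstar‖ < ε := by
  obtain rfl : D = rateDomain σ m M := hD
  obtain rfl : L = lagrangian U H c := funext fun x ↦ funext fun y ↦ funext (hL x y)
  obtain ⟨ystar, hpstar, hfeas, hval⟩ := hxstar_opt
  have hweak : ∀ μ : E → ℝ, (∀ e, 0 ≤ μ e) → fStar ≤ θ μ := fun μ hμ ↦
    hval ▸ le_dual_of_feasible hθ hpstar hfeas hμ
  have hstrong := exists_dual_le_of_slater hθ (fun s ↦ (hUconc s).concaveOn)
    (fun p hp h ↦ hfStar.2 ⟨p, hp, h, rfl⟩) hslater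
  have hU : ∀ s, ContinuousOn (U s) (Set.Icc (m s) (M s)) := fun s ↦ (hUdiff s).continuousOn
  have hθc := continuous_dual hm hθ hγ hxdag hU
  obtain ⟨p₀, hp₀, hslack⟩ := hslater
  have hsublevel := isCompact_dual_sublevel hθ hθc hp₀ hslack
  have hΛne : {l : EuclideanSpace ℝ E | (∀ e, 0 ≤ l e) ∧ θ (fun e ↦ l e) ≤ fStar}.Nonempty :=
    let ⟨μ, hμ, hθμ⟩ := hstrong; ⟨WithLp.toLp 2 μ, hμ, hθμ⟩
  intro ε hε
  rw [setOf_forall_dual_le_eq hweak hstrong]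
  obtain ⟨r, hr, hprimal⟩ := exists_pos_forall_infDist_lt_dist_lt
    (continuous_sessionRates hγ hxdag hU) (hsublevel fStar) hΛne
    (fun l hl ↦ sessionRates_eq_of_dual_le hm hθ hγ hxdag hpstar hfeas hl.1 (hval ▸ hl.2)) hε
  obtain ⟨δ0, hδ0, hdual⟩ := exists_pos_forall_eventually_infDist_lt hΛne (Real.sqrt_nonneg _)
    (fun l hl ↦ hweak _ hl) (fun ε hε ↦ exists_pos_forall_infDist_lt_of_le_add (lt_add_one fStar)
      hθc.continuousOn (hsublevel _) hε) (lt_min hε hr)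
  refine ⟨δ0, hδ0, fun lam x y δ hδ hupd hx hy hrule hlam0 ↦ ?_⟩
  obtain ⟨hsmall, hdiv⟩ := eventually_le_and_tendsto_sum_range hδ0 hδ (hrule.imp_right And.right)
  have hK : ∀ k, lam k ∈ {l : EuclideanSpace ℝ E | ∀ e, 0 ≤ l e}
    | 0 => hlam0
    | k + 1 => fun e ↦ (hupd k e).symm ▸ le_max_left _ _
  obtain ⟨K0, hK0⟩ := eventually_atTop.1 (hdual lam δ hδ hsmall hdiv hK fun k l hl ↦
    sq_dist_subgradient_step_le hm hθ hγ hxdag hH (hx k) (hy k) (hδ k).le hl.1 hl.2 (hupd k))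
  refine ⟨K0, fun k hk ↦ ⟨(hK0 k hk).trans_le (min_le_left _ _), ?_⟩⟩
  rw [← dist_eq_norm, show x k = sessionRates γ xdag (lam k) from PiLp.ext (hx k)]
  exact hprimal _ ((hK0 k hk).trans_le (min_le_right _ _))

/-- convergence of the subgradient algorithm: under A1 and A2, for every
ε > 0 there is a δ0 > 0 such that under step-size rule I (with steps < δ0) or rule II,
the iterates eventually satisfy d(λ(k), Λ*) < ε and ‖x(k) − x*‖ < ε. -/
theorem subgradient_convergence
    {S T E : Type} [Fintype S] [Fintype T] [Fintype E]
    [Nonempty S] [Nonempty T] [Nonempty E] [DecidableEq S] [DecidableEq T]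
    (σ : T → S) (hσ : Function.Surjective σ)
    (H : E → T → ℝ) (hH : ∀ e t, H e t = 0 ∨ H e t = 1)
    (c : E → ℝ) (hc : ∀ e, 0 < c e)
    (m M : S → ℝ) (hm : ∀ s, 0 ≤ m s) (hmM : ∀ s, m s < M s)
    (U : S → ℝ → ℝ)
    -- Assumption A1
    (hUmono : ∀ s, MonotoneOn (U s) (Set.Icc (m s) (M s)))
    (hUconc : ∀ s, StrictConcaveOn ℝ (Set.Icc (m s) (M s)) (U s))
    (hUdiff : ∀ s, ContDiffOn ℝ 1 (U s) (Set.Icc (m s) (M s)))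
    -- the domain D
    (D : Set ((S → ℝ) × (T → ℝ)))
    (hD : D = {p | (∀ t, 0 ≤ p.2 t) ∧
      (∀ s, p.1 s = ∑ t, if σ t = s then p.2 t else 0) ∧
      (∀ s, p.1 s ∈ Set.Icc (m s) (M s))})
    -- the Lagrangian
    (L : (S → ℝ) → (T → ℝ) → (E → ℝ) → ℝ)
    (hL : ∀ x y lam, L x y lam =
      ∑ s, U s (x s) + ∑ e, lam e * (c e - ∑ t, H e t * y t))
    -- the optimal value of the master problem
    (fStar : ℝ)
    (hfStar : IsGreatest {v | ∃ p ∈ D, (∀ e, ∑ t, H e t * p.2 t ≤ c e) ∧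
      v = ∑ s, U s (p.1 s)} fStar)
    -- the dual function
    (θ : (E → ℝ) → ℝ)
    (hθ : ∀ lam : E → ℝ, IsGreatest {v | ∃ p ∈ D, v = L p.1 p.2 lam} (θ lam))
    -- Assumption A2 (Slater)
    (hslater : ∃ p ∈ D, ∀ e, ∑ t, H e t * p.2 t < c e)
    -- the minimum tree cost γ(s, λ)
    (γ : S → (E → ℝ) → ℝ)
    (hγ : ∀ s lam, IsLeast {w | ∃ t, σ t = s ∧ w = ∑ e, H e t * lam e} (γ s lam))
    -- x_s†(w) : the unique maximizer of x ↦ U_s(x) - w·x over [m_s, M_s]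
    (xdag : S → ℝ → ℝ)
    (hxdag : ∀ (s : S) (w : ℝ), xdag s w ∈ Set.Icc (m s) (M s) ∧
      (∀ z ∈ Set.Icc (m s) (M s), U s z - w * z ≤ U s (xdag s w) - w * xdag s w) ∧
      (∀ z ∈ Set.Icc (m s) (M s),
        U s z - w * z = U s (xdag s w) - w * xdag s w → z = xdag s w))
    -- x* is the unique optimal session-rate vector of the MP
    (xstar : EuclideanSpace ℝ S)
    (hxstar_opt : ∃ ystar : T → ℝ, ((fun s => xstar s), ystar) ∈ D ∧
      (∀ e, ∑ t, H e t * ystar t ≤ c e) ∧ ∑ s, U s (xstar s) = fStar)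
    (hxstar_uniq : ∀ p ∈ D, (∀ e, ∑ t, H e t * p.2 t ≤ c e) →
      ∑ s, U s (p.1 s) = fStar → ∀ s, p.1 s = xstar s) :
    ∀ ε : ℝ, 0 < ε → ∃ δ0 : ℝ, 0 < δ0 ∧
      ∀ (lam : ℕ → EuclideanSpace ℝ E) (x : ℕ → EuclideanSpace ℝ S)
        (y : ℕ → T → ℝ) (δseq : ℕ → ℝ),
        (∀ k, 0 < δseq k) →
        -- the dual update
        (∀ k e, lam (k+1) e =
          max 0 (lam k e - δseq k * (c e - ∑ t, H e t * y k t))) →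
        -- the primal updates
        (∀ k s, x k s = xdag s (γ s (fun e => lam k e))) →
        (∀ k, ∃ τ : S → T,
          (∀ s, σ (τ s) = s ∧
            ∑ e, H e (τ s) * lam k e = γ s (fun e => lam k e)) ∧
          (∀ t, y k t = if τ (σ t) = t then x k (σ t) else 0)) →
        -- step size rule I with δ(k) < δ0 for all k, or step size rule II
        (((∃ K : ℕ, ∃ δ : ℝ, 0 < δ ∧ ∀ k, K ≤ k → δseq k = δ) ∧
            (∀ k, δseq k < δ0)) ∨
          ((∃ K : ℕ, ∀ k, K ≤ k → δseq (k+1) ≤ δseq k) ∧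
            Filter.Tendsto δseq Filter.atTop (nhds 0) ∧
            Filter.Tendsto (fun k => ∑ u ∈ Finset.range (k+1), δseq u)
              Filter.atTop Filter.atTop)) →
        -- any initial λ(0) ≥ 0
        (∀ e, 0 ≤ lam 0 e) →
        ∃ K0 : ℕ, ∀ k, K0 ≤ k →
          Metric.infDist (lam k)
            {l : EuclideanSpace ℝ E | (∀ e, 0 ≤ l e) ∧
              ∀ μ : E → ℝ, (∀ e, 0 ≤ μ e) → θ (fun e => l e) ≤ θ μ} < ε ∧
          ‖x k - xstar‖ < ε :=
  subgradient_convergence_general σ H hH c m M hm U hUconc hUdiff D hD L hL fStar hfStar θ hθ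
    hslater γ hγ xdag hxdag xstar hxstar_opt
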